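/- With r_n(x) = (1/N) Σ_{λ∈Λ_n} cos(2π⟨λ, x⟩) on 𝕋 = ℝ²/ℤ², one has ∫_{𝕋} r_n(x)⁴ dx = (3/N²)(1 + O(1/N)), i.e. N²·∫ r_n⁴ dx − 3 = O(1/N) with an absolute implied constant. -/

import Mathlib

open Real MeasureTheory

/-- The set of lattice points on the circle of radius `√n`. -/
noncomputable def Lam (n : ℕ) : Finset (ℤ × ℤ) :=
  (Finset.Icc (-(n : ℤ), -(n : ℤ)) ((n : ℤ), (n : ℤ))).filter
    (fun l => l.1 ^ 2 + l.2 ^ 2 = (n : ℤ))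

/-- The covariance function `r_n(x) = (1/N) Σ_{λ∈Λ_n} cos(2π⟨λ,x⟩)` on the torus `ℝ²/ℤ²`. -/
noncomputable def covFn (n : ℕ) (x y : ℝ) : ℝ :=
  (1 / ((Lam n).card : ℝ)) *
    ∑ l ∈ Lam n, Real.cos (2 * Real.pi * ((l.1 : ℝ) * x + (l.2 : ℝ) * y))

/-! ### Basic facts about `Lam` -/

lemma mem_Lam {n : ℕ} {l : ℤ × ℤ} : l ∈ Lam n ↔ l.1 ^ 2 + l.2 ^ 2 = (n : ℤ) := by
  simp only [Lam, Finset.mem_filter, Finset.mem_Icc, and_iff_right_iff_imp, Prod.le_def]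
  intro h
  constructor <;> constructor <;>
    nlinarith [sq_nonneg l.1, sq_nonneg l.2, sq_nonneg (l.1-1), sq_nonneg (l.1+1),
      sq_nonneg (l.2-1), sq_nonneg (l.2+1)]

lemma neg_mem_Lam {n : ℕ} {l : ℤ × ℤ} (h : l ∈ Lam n) : -l ∈ Lam n := by
  rw [mem_Lam] at *; simpa [Prod.fst, Prod.snd] using by linarith [h]

lemma zero_not_mem_Lam {n : ℕ} (hn : n ≠ 0) : ((0,0) : ℤ × ℤ) ∉ Lam n := by
  rw [mem_Lam]; simp; omega

/-! ### The combinatorial structures -/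

abbrev Q4 := (ℤ×ℤ) × (ℤ×ℤ) × (ℤ×ℤ) × (ℤ×ℤ)

noncomputable def Qset (n : ℕ) : Finset Q4 := Lam n ×ˢ Lam n ×ˢ Lam n ×ˢ Lam n

noncomputable def Tset (n : ℕ) : Finset Q4 := (Qset n).filter (fun q => q.1 + q.2.1 + q.2.2.1 + q.2.2.2 = 0)

lemma mem_Qset {n : ℕ} {q : Q4} :
    q ∈ Qset n ↔ q.1 ∈ Lam n ∧ q.2.1 ∈ Lam n ∧ q.2.2.1 ∈ Lam n ∧ q.2.2.2 ∈ Lam n := by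
  simp [Qset, Finset.mem_product]

/-! ### The geometric key lemma -/

lemma orth3 {u v w : ℤ × ℤ} (h1 : u.1*v.1 + u.2*v.2 = 0) (h2 : u.1*w.1 + u.2*w.2 = 0)
    (h3 : v.1*w.1 + v.2*w.2 = 0) : u = 0 ∨ v = 0 ∨ w = 0 := by
  by_contra hc
  push_neg at hc
  obtain ⟨hu, hv, hw⟩ := hc
  have hu' : u.1^2 + u.2^2 > 0 := by
    rcases eq_or_ne u.1 0 with h1' | h1'
    · have : u.2 ≠ 0 := by simpa [h1', Prod.ext_iff] using hu
      positivity
    · positivity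
  have hv' : v.1^2 + v.2^2 > 0 := by
    rcases eq_or_ne v.1 0 with h1' | h1'
    · have : v.2 ≠ 0 := by simpa [h1', Prod.ext_iff] using hv
      positivity
    · positivity
  have hD : (u.1*v.2 - u.2*v.1)^2 > 0 := by nlinarith
  have hw1 : (u.1*v.2 - u.2*v.1) * w.1 = 0 := by linear_combination v.2 * h2 - u.2 * h3
  have hw2 : (u.1*v.2 - u.2*v.1) * w.2 = 0 := by linear_combination -v.1 * h2 + u.1 * h3
  have hD0 : (u.1*v.2 - u.2*v.1) ≠ 0 := by nlinarith
  exact hw (Prod.ext_iff.mpr ⟨by have := mul_eq_zero.mp hw1; tauto,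
    by have := mul_eq_zero.mp hw2; tauto⟩)

lemma key {n : ℕ} {a b c d : ℤ × ℤ} (ha : a ∈ Lam n) (hb : b ∈ Lam n)
    (hc : c ∈ Lam n) (hd : d ∈ Lam n) (h : a + b + c + d = 0) :
    (b = -a ∧ d = -c) ∨ (c = -a ∧ d = -b) ∨ (d = -a ∧ c = -b) := by
  rw [mem_Lam] at ha hb hc hd
  have h1 : a.1 + b.1 + c.1 + d.1 = 0 := by
    have := congrArg Prod.fst h; simpa using this
  have h2 : a.2 + b.2 + c.2 + d.2 = 0 := by
    have := congrArg Prod.snd h; simpa using this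
  have o1 : (a+b).1*(a+c).1 + (a+b).2*(a+c).2 = 0 := by
    have h2' : 2 * ((a+b).1*(a+c).1 + (a+b).2*(a+c).2) = 0 := by
      simp only [Prod.fst_add, Prod.snd_add]
      linear_combination hd + ha - hb - hc + (a.1 + b.1 + c.1 - d.1) * h1 + (a.2 + b.2 + c.2 - d.2) * h2
    omega
  have o2 : (a+b).1*(a+d).1 + (a+b).2*(a+d).2 = 0 := by
    have h2' : 2 * ((a+b).1*(a+d).1 + (a+b).2*(a+d).2) = 0 := by
      simp only [Prod.fst_add, Prod.snd_add]
      linear_combination hc + ha - hb - hd + (a.1 + b.1 + d.1 - c.1) * h1 + (a.2 + b.2 + d.2 - c.2) * h2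
    omega
  have o3 : (a+c).1*(a+d).1 + (a+c).2*(a+d).2 = 0 := by
    have h2' : 2 * ((a+c).1*(a+d).1 + (a+c).2*(a+d).2) = 0 := by
      simp only [Prod.fst_add, Prod.snd_add]
      linear_combination hb + ha - hc - hd + (a.1 + c.1 + d.1 - b.1) * h1 + (a.2 + c.2 + d.2 - b.2) * h2
    omega
  rcases orth3 o1 o2 o3 with h0 | h0 | h0
  · exact Or.inl ⟨by linear_combination h0, by linear_combination h - h0⟩
  · exact Or.inr (Or.inl ⟨by linear_combination h0, by linear_combination h - h0⟩)
  · exact Or.inr (Or.inr ⟨by linear_combination h0, by linear_combination h - h0⟩)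
lemma Tcard {n : ℕ} (hn : n ≠ 0) :
    (Tset n).card + 3 * (Lam n).card = 3 * (Lam n).card ^ 2 := by
  classical
  set Λ := Lam n
  set N := Λ.card with hNdef
  have hinjA : Function.Injective (fun p : (ℤ×ℤ)×(ℤ×ℤ) => ((p.1, -p.1, p.2, -p.2) : Q4)) := by
    intro p r h; simp only [Prod.mk.injEq] at h; exact Prod.ext h.1 h.2.2.1
  have hinjB : Function.Injective (fun p : (ℤ×ℤ)×(ℤ×ℤ) => ((p.1, p.2, -p.1, -p.2) : Q4)) := by
    intro p r h; simp only [Prod.mk.injEq] at h; exact Prod.ext h.1 h.2.1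
  have hinjC : Function.Injective (fun p : (ℤ×ℤ)×(ℤ×ℤ) => ((p.1, p.2, -p.2, -p.1) : Q4)) := by
    intro p r h; simp only [Prod.mk.injEq] at h; exact Prod.ext h.1 h.2.1
  set A := (Λ ×ˢ Λ).image (fun p : (ℤ×ℤ)×(ℤ×ℤ) => ((p.1, -p.1, p.2, -p.2) : Q4)) with hA
  set B := (Λ ×ˢ Λ).image (fun p : (ℤ×ℤ)×(ℤ×ℤ) => ((p.1, p.2, -p.1, -p.2) : Q4)) with hB
  set C := (Λ ×ˢ Λ).image (fun p : (ℤ×ℤ)×(ℤ×ℤ) => ((p.1, p.2, -p.2, -p.1) : Q4)) with hC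
  have cardA : A.card = N^2 := by
    rw [hA, Finset.card_image_of_injective _ hinjA, Finset.card_product]; ring
  have cardB : B.card = N^2 := by
    rw [hB, Finset.card_image_of_injective _ hinjB, Finset.card_product]; ring
  have cardC : C.card = N^2 := by
    rw [hC, Finset.card_image_of_injective _ hinjC, Finset.card_product]; ring
  have hT : Tset n = A ∪ B ∪ C := by
    ext q
    obtain ⟨a, b, c, d⟩ := q
    simp only [Tset, Finset.mem_filter, mem_Qset, Finset.mem_union, hA, hB, hC,
      Finset.mem_image, Finset.mem_product]
    constructor
    · rintro ⟨⟨ha, hb, hc, hd⟩, hsum⟩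
      rcases key ha hb hc hd hsum with ⟨h1, h2⟩ | ⟨h1, h2⟩ | ⟨h1, h2⟩
      · exact Or.inl (Or.inl ⟨(a, c), ⟨ha, hc⟩, by simp [h1, h2]⟩)
      · exact Or.inl (Or.inr ⟨(a, b), ⟨ha, hb⟩, by simp [h1, h2]⟩)
      · exact Or.inr ⟨(a, b), ⟨ha, hb⟩, by simp [h1, h2]⟩
    · rintro ((⟨p, ⟨hp1, hp2⟩, hp⟩ | ⟨p, ⟨hp1, hp2⟩, hp⟩) | ⟨p, ⟨hp1, hp2⟩, hp⟩) <;>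
      · simp only [Prod.mk.injEq] at hp
        obtain ⟨e1, e2, e3, e4⟩ := hp
        subst e1; subst e2; subst e3; subst e4
        refine ⟨⟨hp1, ?_, ?_, ?_⟩, by abel⟩ <;>
          first | exact hp1 | exact hp2 | exact neg_mem_Lam hp1 | exact neg_mem_Lam hp2
  have hginj : Function.Injective (fun a : ℤ×ℤ => ((a, -a, -a, a) : Q4)) := by
    intro p r h; simp only [Prod.mk.injEq] at h; exact h.1
  have hginj2 : Function.Injective (fun a : ℤ×ℤ => ((a, -a, a, -a) : Q4)) := by
    intro p r h; simp only [Prod.mk.injEq] at h; exact h.1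
  have hginj3 : Function.Injective (fun a : ℤ×ℤ => ((a, a, -a, -a) : Q4)) := by
    intro p r h; simp only [Prod.mk.injEq] at h; exact h.1
  have forwardfix : True := trivial
  have hAB : A ∩ B = Λ.image (fun a : ℤ×ℤ => ((a, -a, -a, a) : Q4)) := by
    ext q
    simp only [Finset.mem_inter, hA, hB, Finset.mem_image, Finset.mem_product]
    constructor
    · rintro ⟨⟨⟨⟨p1, p2⟩, ⟨p3, p4⟩⟩, hp, hpe⟩, ⟨⟨⟨r1, r2⟩, ⟨r3, r4⟩⟩, hr, hre⟩⟩
      subst hpe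
      simp only [Prod.mk.injEq, Prod.neg_mk] at hre
      refine ⟨(p1, p2), hp.1, ?_⟩
      simp [Prod.mk.injEq, Prod.neg_mk]
      omega
    · rintro ⟨a, ha, he⟩
      subst he
      exact ⟨⟨(a, -a), by simp [Finset.mem_product, ha]; exact neg_mem_Lam ha, by simp⟩,
             ⟨(a, -a), by simp [Finset.mem_product, ha]; exact neg_mem_Lam ha, by simp⟩⟩
  have hAC : A ∩ C = Λ.image (fun a : ℤ×ℤ => ((a, -a, a, -a) : Q4)) := by
    ext q
    simp only [Finset.mem_inter, hA, hC, Finset.mem_image, Finset.mem_product]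
    constructor
    · rintro ⟨⟨⟨⟨p1, p2⟩, ⟨p3, p4⟩⟩, hp, hpe⟩, ⟨⟨⟨r1, r2⟩, ⟨r3, r4⟩⟩, hr, hre⟩⟩
      subst hpe
      simp only [Prod.mk.injEq, Prod.neg_mk] at hre
      refine ⟨(p1, p2), hp.1, ?_⟩
      simp [Prod.mk.injEq, Prod.neg_mk]
      omega
    · rintro ⟨a, ha, he⟩
      subst he
      exact ⟨⟨(a, a), by simp [Finset.mem_product, ha], by simp⟩,
             ⟨(a, -a), by simp [Finset.mem_product, ha]; exact neg_mem_Lam ha, by simp⟩⟩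
  have hBC : B ∩ C = Λ.image (fun a : ℤ×ℤ => ((a, a, -a, -a) : Q4)) := by
    ext q
    simp only [Finset.mem_inter, hB, hC, Finset.mem_image, Finset.mem_product]
    constructor
    · rintro ⟨⟨⟨⟨p1, p2⟩, ⟨p3, p4⟩⟩, hp, hpe⟩, ⟨⟨⟨r1, r2⟩, ⟨r3, r4⟩⟩, hr, hre⟩⟩
      subst hpe
      simp only [Prod.mk.injEq, Prod.neg_mk] at hre
      refine ⟨(p1, p2), hp.1, ?_⟩
      simp [Prod.mk.injEq, Prod.neg_mk]
      omega
    · rintro ⟨a, ha, he⟩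
      subst he
      exact ⟨⟨(a, a), by simp [Finset.mem_product, ha], by simp⟩,
             ⟨(a, a), by simp [Finset.mem_product, ha], by simp⟩⟩
  have cardAB : (A ∩ B).card = N := by rw [hAB, Finset.card_image_of_injective _ hginj]
  have cardAC : (A ∩ C).card = N := by rw [hAC, Finset.card_image_of_injective _ hginj2]
  have cardBC : (B ∩ C).card = N := by rw [hBC, Finset.card_image_of_injective _ hginj3]
  have hempty : (A ∩ B) ∩ (A ∩ C) = ∅ := by
    rw [hAB, hAC]
    apply Finset.eq_empty_of_forall_notMem
    intro q hq
    simp only [Finset.mem_inter, Finset.mem_image] at hq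
    obtain ⟨⟨⟨a1, a2⟩, ha, he⟩, ⟨⟨b1, b2⟩, hb, he2⟩⟩ := hq
    rw [← he] at he2
    simp only [Prod.mk.injEq, Prod.neg_mk] at he2
    have : (a1, a2) = ((0, 0) : ℤ × ℤ) := by
      simp only [Prod.mk.injEq]; omega
    rw [this] at ha
    exact zero_not_mem_Lam hn ha
  have u1 := Finset.card_union_add_card_inter B C
  have u2 := Finset.card_union_add_card_inter A (B ∪ C)
  have u3 := Finset.card_union_add_card_inter (A ∩ B) (A ∩ C)
  rw [Finset.inter_union_distrib_left] at u2
  rw [hempty] at u3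
  have hTc : (Tset n).card = (A ∪ (B ∪ C)).card := by rw [hT, Finset.union_assoc]
  simp only [Finset.card_empty] at u3
  set M := N ^ 2
  omega

/-! ### Trigonometric term and sign expansion -/

noncomputable def trm (s : ℤ × ℤ) (x y : ℝ) : ℝ := Real.cos (2*π*((s.1:ℝ)*x + (s.2:ℝ)*y))

def E : Finset (ℤ × ℤ × ℤ) := ({1,-1} : Finset ℤ) ×ˢ ({1,-1} : Finset ℤ) ×ˢ ({1,-1} : Finset ℤ)

def scl (e : ℤ) (l : ℤ × ℤ) : ℤ × ℤ := (e * l.1, e * l.2)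

def vmap (q : Q4) (ε : ℤ × ℤ × ℤ) : ℤ × ℤ :=
  q.1 + scl ε.1 q.2.1 + scl ε.2.1 q.2.2.1 + scl ε.2.2 q.2.2.2

lemma mem_E {ε : ℤ × ℤ × ℤ} (hε : ε ∈ E) :
    (ε.1 = 1 ∨ ε.1 = -1) ∧ (ε.2.1 = 1 ∨ ε.2.1 = -1) ∧ (ε.2.2 = 1 ∨ ε.2.2 = -1) := by
  simp only [E, Finset.mem_product, Finset.mem_insert, Finset.mem_singleton] at hε
  tauto

lemma scl_mem {n : ℕ} {e : ℤ} (he : e = 1 ∨ e = -1) {l : ℤ × ℤ} (h : l ∈ Lam n) :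
    scl e l ∈ Lam n := by
  rw [mem_Lam] at *
  rcases he with he | he <;> simp [scl, he] <;> linarith [h]

lemma scl_scl {e : ℤ} (he : e = 1 ∨ e = -1) (l : ℤ × ℤ) : scl e (scl e l) = l := by
  rcases he with he | he <;> simp [scl, he]

lemma cos4 (t u v w : ℝ) : Real.cos t * Real.cos u * Real.cos v * Real.cos w
    = (1/8) * ∑ ε ∈ E, Real.cos (t + (ε.1:ℝ)*u + (ε.2.1:ℝ)*v + (ε.2.2:ℝ)*w) := by
  simp [E, Finset.sum_product, Real.cos_add, Real.cos_sub]
  ring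

lemma trm_prod (q : Q4) (x y : ℝ) :
    trm q.1 x y * trm q.2.1 x y * trm q.2.2.1 x y * trm q.2.2.2 x y
      = (1/8) * ∑ ε ∈ E, trm (vmap q ε) x y := by
  unfold trm
  rw [cos4]
  congr 1
  apply Finset.sum_congr rfl
  intro ε _
  congr 1
  simp only [vmap, scl, Prod.fst_add, Prod.snd_add]
  push_cast
  ring

lemma sum_pow4 {α : Type*} (s : Finset α) (f : α → ℝ) :
    (∑ a ∈ s, f a) ^ 4 = ∑ q ∈ s ×ˢ s ×ˢ s ×ˢ s, f q.1 * f q.2.1 * f q.2.2.1 * f q.2.2.2 := by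
  simp only [Finset.sum_product]
  rw [show (∑ a ∈ s, f a) ^ 4
      = (∑ a ∈ s, f a) * (∑ a ∈ s, f a) * (∑ a ∈ s, f a) * (∑ a ∈ s, f a) by ring]
  simp only [Finset.sum_mul, Finset.mul_sum]
  exact Finset.sum_congr rfl fun a _ => Finset.sum_congr rfl fun b _ =>
    Finset.sum_congr rfl fun c _ => Finset.sum_congr rfl fun d _ => by ring

/-! ### Elementary integrals -/

lemma oneD (B : ℤ) (c : ℝ) :
    (∫ y in (0:ℝ)..1, Real.cos (2*π*(B:ℝ)*y + c)) = if B = 0 then Real.cos c else 0 := by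
  by_cases hB : B = 0
  · simp [hB]
  · have hk : (2*π*(B:ℝ)) ≠ 0 := by
      have : (B:ℝ) ≠ 0 := Int.cast_ne_zero.mpr hB
      positivity
    rw [intervalIntegral.integral_comp_mul_add Real.cos hk c, integral_cos]
    have hs : Real.sin (2*π*(B:ℝ)*1 + c) = Real.sin c := by
      rw [show 2*π*(B:ℝ)*1 + c = c + (B:ℝ)*(2*π) by ring, Real.sin_add_int_mul_two_pi]
    simp only [mul_one, mul_zero, zero_add] at *
    rw [hs]
    simp [hB]

lemma trm_cont (s : ℤ × ℤ) (x : ℝ) : Continuous (fun y => trm s x y) := by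
  unfold trm; fun_prop

lemma I1 (s : ℤ × ℤ) (x : ℝ) :
    (∫ y in (0:ℝ)..1, trm s x y) = if s.2 = 0 then Real.cos (2*π*(s.1:ℝ)*x) else 0 := by
  have h : (fun y => trm s x y) = fun y => Real.cos (2*π*(s.2:ℝ)*y + 2*π*(s.1:ℝ)*x) := by
    funext y; unfold trm; congr 1; ring
  rw [h, oneD]

lemma I0 (A : ℤ) :
    (∫ x in (0:ℝ)..1, Real.cos (2*π*(A:ℝ)*x)) = if A = 0 then 1 else 0 := by
  have := oneD A 0
  simp only [add_zero, Real.cos_zero] at this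
  rw [show (fun x => Real.cos (2*π*(A:ℝ)*x)) = fun x => Real.cos (2*π*(A:ℝ)*x + 0) by
    funext x; ring_nf] at *
  rw [this]

lemma I1' (s : ℤ × ℤ) :
    (∫ x in (0:ℝ)..1, (if s.2 = 0 then Real.cos (2*π*(s.1:ℝ)*x) else 0))
      = if s = 0 then 1 else 0 := by
  by_cases h2 : s.2 = 0
  · simp only [h2, if_true, I0]
    by_cases h1 : s.1 = 0 <;> simp [h1, h2, Prod.ext_iff]
  · simp [h2, Prod.ext_iff]

/-! ### Counting for each sign pattern -/

lemma count_eps {n : ℕ} {ε : ℤ × ℤ × ℤ} (hε : ε ∈ E) :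
    ((Qset n).filter (fun q => vmap q ε = 0)).card = (Tset n).card := by
  obtain ⟨he1, he2, he3⟩ := mem_E hε
  apply Finset.card_nbij'
    (i := fun q => (q.1, scl ε.1 q.2.1, scl ε.2.1 q.2.2.1, scl ε.2.2 q.2.2.2))
    (j := fun q => (q.1, scl ε.1 q.2.1, scl ε.2.1 q.2.2.1, scl ε.2.2 q.2.2.2))
  · intro q hq
    simp only [Finset.mem_coe, Finset.mem_filter, mem_Qset] at hq
    obtain ⟨⟨ha, hb, hc, hd⟩, hv⟩ := hq
    simp only [Finset.mem_coe, Tset, Finset.mem_filter, mem_Qset]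
    exact ⟨⟨ha, scl_mem he1 hb, scl_mem he2 hc, scl_mem he3 hd⟩, hv⟩
  · intro q hq
    simp only [Finset.mem_coe, Tset, Finset.mem_filter, mem_Qset] at hq
    obtain ⟨⟨ha, hb, hc, hd⟩, hv⟩ := hq
    simp only [Finset.mem_coe, Finset.mem_filter, mem_Qset]
    refine ⟨⟨ha, scl_mem he1 hb, scl_mem he2 hc, scl_mem he3 hd⟩, ?_⟩
    simpa only [vmap, scl_scl he1, scl_scl he2, scl_scl he3] using hv
  · intro q _
    simp only [scl_scl he1, scl_scl he2, scl_scl he3]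
  · intro q _
    simp only [scl_scl he1, scl_scl he2, scl_scl he3]

/-! ### Evaluation of the fourth moment integral -/

lemma integral_eval (n : ℕ) :
    (∫ x in (0:ℝ)..1, ∫ y in (0:ℝ)..1, (covFn n x y)^4)
      = ((Tset n).card : ℝ) / ((Lam n).card : ℝ) ^ 4 := by
  classical
  set N := (Lam n).card with hN
  have key_pt : ∀ x y : ℝ, covFn n x y ^ 4
      = (1/(N:ℝ)^4) * (1/8) * ∑ p ∈ (Qset n) ×ˢ E, trm (vmap p.1 p.2) x y := by
    intro x y
    have h0 : covFn n x y = (1/(N:ℝ)) * ∑ l ∈ Lam n, trm l x y := rfl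
    rw [h0, mul_pow, sum_pow4]
    rw [show ∑ q ∈ Lam n ×ˢ Lam n ×ˢ Lam n ×ˢ Lam n,
          trm q.1 x y * trm q.2.1 x y * trm q.2.2.1 x y * trm q.2.2.2 x y
        = ∑ q ∈ Qset n, (1/8) * ∑ ε ∈ E, trm (vmap q ε) x y from
      Finset.sum_congr rfl fun q _ => trm_prod q x y]
    rw [Finset.sum_product]
    rw [← Finset.mul_sum]
    ring
  have inner_eq : ∀ x : ℝ, (∫ y in (0:ℝ)..1, covFn n x y ^ 4)
      = (1/(N:ℝ)^4) * (1/8) * ∑ p ∈ (Qset n) ×ˢ E,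
          (if (vmap p.1 p.2).2 = 0 then Real.cos (2*π*((vmap p.1 p.2).1:ℝ)*x) else 0) := by
    intro x
    simp only [key_pt]
    rw [intervalIntegral.integral_const_mul,
      intervalIntegral.integral_finset_sum
        (fun p _ => ((trm_cont _ x).intervalIntegrable 0 1))]
    simp only [I1]
  simp only [inner_eq]
  have hint : ∀ p ∈ (Qset n) ×ˢ E, IntervalIntegrable
      (fun x : ℝ => (if (vmap p.1 p.2).2 = 0 then Real.cos (2*π*((vmap p.1 p.2).1:ℝ)*x) else 0))
      volume 0 1 := by
    intro p _
    by_cases h : (vmap p.1 p.2).2 = 0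
    · simp only [h, if_true]
      exact (Continuous.intervalIntegrable (by fun_prop) 0 1)
    · simp only [h, if_false]
      exact intervalIntegrable_const
  rw [intervalIntegral.integral_const_mul, intervalIntegral.integral_finset_sum hint]
  simp only [I1']
  have hsum : (∑ p ∈ (Qset n) ×ˢ E, (if vmap p.1 p.2 = 0 then (1:ℝ) else 0))
      = 8 * ((Tset n).card : ℝ) := by
    rw [Finset.sum_product, Finset.sum_comm]
    have hc : ∀ ε ∈ E, (∑ q ∈ Qset n, (if vmap q ε = 0 then (1:ℝ) else 0))
        = ((Tset n).card : ℝ) := by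
      intro ε hε
      rw [Finset.sum_boole, count_eps hε]
    rw [Finset.sum_congr rfl hc, Finset.sum_const]
    have hE : E.card = 8 := by decide
    rw [hE]
    push_cast
    ring
  rw [hsum]
  field_simp

theorem fourth_moment_of_covariance :
    ∃ C : ℝ, ∀ n : ℕ, 0 < (Lam n).card →
      |((Lam n).card : ℝ) ^ 2 *
          (∫ x in (0 : ℝ)..1, ∫ y in (0 : ℝ)..1, (covFn n x y) ^ 4) - 3| ≤
        C / ((Lam n).card : ℝ) := by
  use 3
  intro n hN
  rw [integral_eval n]
  by_cases hn : n = 0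
  · subst hn
    have hL : Lam 0 = {((0,0) : ℤ × ℤ)} := by
      ext l
      simp only [mem_Lam, Nat.cast_zero, Finset.mem_singleton, Prod.ext_iff]
      constructor
      · intro h
        constructor <;> nlinarith [sq_nonneg l.1, sq_nonneg l.2]
      · rintro ⟨h1, h2⟩
        simp [h1, h2]
    have hN1 : (Lam 0).card = 1 := by rw [hL]; rfl
    have hT : Tset 0 = {((((0,0),(0,0),(0,0),(0,0))) : Q4)} := by
      apply Finset.Subset.antisymm
      · intro q hq
        simp only [Tset, Finset.mem_filter, mem_Qset, hL, Finset.mem_singleton] at hq ⊢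
        obtain ⟨⟨h1, h2, h3, h4⟩, _⟩ := hq
        obtain ⟨a, b, c, d⟩ := q
        simp_all
      · intro q hq
        simp only [Finset.mem_singleton] at hq
        subst hq
        simp only [Tset, Finset.mem_filter, mem_Qset, hL, Finset.mem_singleton]
        exact ⟨by simp, by decide⟩
    have hT1 : (Tset 0).card = 1 := by rw [hT]; rfl
    rw [hN1, hT1]
    norm_num
  · have hTc := Tcard hn
    set N := (Lam n).card with hNd
    have hN0 : (0:ℝ) < (N:ℝ) := by exact_mod_cast hN
    have hTr : ((Tset n).card : ℝ) = 3*(N:ℝ)^2 - 3*(N:ℝ) := by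
      have h := congrArg (Nat.cast : ℕ → ℝ) hTc
      push_cast at h
      linarith
    rw [hTr]
    have heq : (N:ℝ)^2 * ((3*(N:ℝ)^2 - 3*(N:ℝ)) / (N:ℝ)^4) - 3 = -3/(N:ℝ) := by
      field_simp
      ring
    rw [heq, abs_div, abs_neg]
    rw [abs_of_nonneg (by norm_num : (0:ℝ) ≤ 3), abs_of_pos hN0]
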